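/- Linearization of the system (3.47): let (a_{nm}) be an N×N array of complex constants, let V₁,…,V_N : ℝ → (k×k complex matrices) be differentiable functions satisfying the linear system V̇_n = Σ_{m=1}^{N} a_{nm} V_m, and let U₁,…,U_N : ℝ → (k×k complex matrices) be differentiable with each U_n(t) invertible and U̇_n = V_n U_n. Then each U_n is twice differentiable and satisfies Ü_n = U̇_n U_n⁻¹ U̇_n + Σ_{m=1}^{N} a_{nm} U̇_m U_m⁻¹ U_n. -/

import Mathlib

open Matrix

attribute [local instance] Matrix.normedAddCommGroup Matrix.normedSpace

noncomputable section

/-! By the product rule `d/dt (V_n U_n) = (Σ_m a_{nm} V_m) U_n + V_n V_n U_n`, and this is the claimed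
right-hand side once `U̇_m U_m⁻¹ = V_m U_m U_m⁻¹` is reduced to `V_m` using invertibility of `U_m`. -/

theorem HasDerivAt.matrix_mul {𝕜 R n : Type*} [NontriviallyNormedField 𝕜] [NormedRing R]
    [NormedAlgebra 𝕜 R] [Fintype n] [DecidableEq n] {A B : 𝕜 → Matrix n n R}
    {A' B' : Matrix n n R} {t : 𝕜} (hA : HasDerivAt A A' t) (hB : HasDerivAt B B' t) :
    HasDerivAt (fun s => A s * B s) (A' * B t + A t * B') t := by
  -- The `L∞` operator norm induces the same topology, and makes square matrices a normed algebra.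
  let := Matrix.linftyOpNormedRing (n := n) (α := R)
  let := Matrix.linftyOpNormedAlgebra (n := n) (R := 𝕜) (α := R)
  exact hA.mul hB

/-- Linearization of the system (3.47) of the paper via the positions (3.48), (3.49): if
`V̇_n = Σ_m a_{nm} V_m` and `U̇_n = V_n U_n` with `U_n` invertible, then
`Ü_n = U̇_n U_n⁻¹ U̇_n + Σ_m a_{nm} U̇_m U_m⁻¹ U_n`. -/
theorem linearization_of_eq_347 (k N : ℕ) (a : Fin N → Fin N → ℂ)
    (V U : Fin N → ℝ → Matrix (Fin k) (Fin k) ℂ)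
    (hV : ∀ n t, HasDerivAt (V n) (∑ m, a n m • V m t) t)
    (hUinv : ∀ n t, IsUnit (U n t))
    (hU : ∀ n t, HasDerivAt (U n) (V n t * U n t) t) :
    ∀ n t, HasDerivAt (fun s => V n s * U n s)
      ((V n t * U n t) * (U n t)⁻¹ * (V n t * U n t)
        + ∑ m, a n m • ((V m t * U m t) * (U m t)⁻¹ * U n t)) t := by
  intro n t
  have cancel : ∀ m (B : Matrix (Fin k) (Fin k) ℂ), B * U m t * (U m t)⁻¹ = B := fun m B =>
    mul_nonsing_inv_cancel_right _ _ ((isUnit_iff_isUnit_det _).mp (hUinv m t))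
  simp only [cancel]
  convert (hV n t).matrix_mul (hU n t) using 1
  rw [add_comm, Finset.sum_mul, ← mul_assoc]
  simp only [smul_mul_assoc]
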